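/- In the graph on S_τ where two vertices are joined by an edge of length 1 whenever one is obtained from the other by simultaneously executing a set of pairwise-independent instructions, the length of the shortest directed path from (s₀,1) to (s,1) equals the minimum execution time, over all traces μ with s₀·μ = s, of a parallel process realizing μ with time function τ. -/

import Mathlib

/-!
A configuration `(s, p)` of the refined system is recorded by its progress word `r`, in which
each instruction in progress occurs as often as it has advanced. A tick advancing the set `F`
and completing the instructions `l` turns `r ++ F` into the `τ`-expansion of `l` followed by the new
progress word, up to trace equivalence. Reading the ticks of a path as the blocks of a parallel
process (dropping idle ticks) therefore gives a process with at most as many blocks. Conversely,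
a parallel process is executed block by block: the completed instructions are peeled off the
front of the expanded trace by left cancellation, which follows from the projection lemma
(two words are trace equivalent iff their projections onto every dependent pair agree).
-/

/-- One elementary transposition of adjacent independent letters. -/
def TraceStep {E : Type} (I : E → E → Prop) (w₁ w₂ : List E) : Prop :=
  ∃ u v a b, I a b ∧ w₁ = u ++ a :: b :: v ∧ w₂ = u ++ b :: a :: v

/-- Trace equivalence: the equivalence relation generated by transposing
adjacent independent letters. -/
def TraceEquiv {E : Type} (I : E → E → Prop) : List E → List E → Prop :=
  Relation.EqvGen (TraceStep I)

/-- A process (path) in an asynchronous system: a chain of transitions from `s`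
to `s'` labelled by the word `w`. -/
inductive ProcPath {S E : Type} (Tran : S → E → S → Prop) : S → List E → S → Prop
  | nil (s : S) : ProcPath Tran s [] s
  | cons {s s₁ s' : S} {e : E} {w : List E} :
      Tran s e s₁ → ProcPath Tran s₁ w s' → ProcPath Tran s (e :: w) s'

/-- A step: a nonempty word of pairwise independent distinct letters written in
increasing order. -/
def IsStep {E : Type} [LT E] (I : E → E → Prop) (c : List E) : Prop :=
  c ≠ [] ∧ c.Pairwise (· < ·) ∧ c.Pairwise I

/-- The Foata conditions for a factorization into steps. -/
def IsFoata {E : Type} [LT E] (I : E → E → Prop) (L : List (List E)) : Prop :=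
  (∀ c ∈ L, IsStep I c) ∧
  L.Chain' (fun c₁ c₂ => ∀ a ∈ c₂, ∃ b ∈ c₁, ¬ I a b)

/-- A parallel process: a factorization into nonempty blocks of pairwise
independent letters. -/
def IsParProc {E : Type} (I : E → E → Prop) (M : List (List E)) : Prop :=
  ∀ c ∈ M, c ≠ [] ∧ c.Pairwise I

/-- Replace each letter `e` of a word by `τ e` copies of the corresponding
unit-time small instruction. -/
def expandWord {E : Type} (τ : E → ℕ) (w : List E) : List E :=
  (w.map fun e => List.replicate (τ e) e).flatten

/-- One time unit of the refined system `A_τ`: a state of `A_τ` is a pair of a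
state `s ∈ S` and a progress function recording partially executed
pairwise-independent instructions. In one tick, a set `F` of pairwise
independent instructions (each already in progress or newly started and
independent of all in-progress ones) each advance by one progress unit;
instructions reaching `τ` complete and act on the state via `Tran`. -/
def Tick {S E : Type} [DecidableEq E] (Tran : S → E → S → Prop)
    (I : E → E → Prop) (τ : E → ℕ) (c c' : S × (E → ℕ)) : Prop :=
  ∃ F : Finset E,
    (∀ a ∈ F, ∀ b ∈ F, a ≠ b → I a b) ∧
    (∀ a ∈ F, 0 < c.2 a ∨ ∀ b, 0 < c.2 b → I a b) ∧
    (∀ a ∈ F, c.2 a < τ a) ∧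
    (∀ a, c'.2 a = if a ∈ F then (if c.2 a + 1 = τ a then 0 else c.2 a + 1) else c.2 a) ∧
    ∃ l : List E, l.Nodup ∧ l.toFinset = F.filter (fun a => c.2 a + 1 = τ a) ∧
      ProcPath Tran c.1 l c'.1

/-- `TickN n c c'`: the vertex `c'` of the graph on `S_τ` is reachable from `c`
by a directed path of length `n` (each edge has length 1). -/
def TickN {S E : Type} [DecidableEq E] (Tran : S → E → S → Prop)
    (I : E → E → Prop) (τ : E → ℕ) : ℕ → S × (E → ℕ) → S × (E → ℕ) → Prop
  | 0, c, c' => c' = c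
  | n + 1, c, c' => ∃ c₁, Tick Tran I τ c c₁ ∧ TickN Tran I τ n c₁ c'


open List

section Trace

variable {E : Type} {I : E → E → Prop} {u v w x y z : List E}

theorem TraceEquiv.refl (u : List E) : TraceEquiv I u u := Relation.EqvGen.refl u

theorem TraceEquiv.symm (h : TraceEquiv I u v) : TraceEquiv I v u := Relation.EqvGen.symm _ _ h

theorem TraceEquiv.trans (h : TraceEquiv I u v) (h' : TraceEquiv I v w) : TraceEquiv I u w :=
  Relation.EqvGen.trans _ _ _ h h'

theorem TraceEquiv.of_step (h : TraceStep I u v) : TraceEquiv I u v := Relation.EqvGen.rel _ _ h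

theorem TraceEquiv.le_of_equivalence {r : List E → List E → Prop} (hr : Equivalence r)
    (hstep : ∀ u v, TraceStep I u v → r u v) (h : TraceEquiv I u v) : r u v :=
  hr.eqvGen_iff.1 (Relation.EqvGen.mono hstep u v h)

theorem TraceEquiv.map {f : List E → List E}
    (hf : ∀ u v, TraceStep I u v → TraceEquiv I (f u) (f v)) (h : TraceEquiv I u v) :
    TraceEquiv I (f u) (f v) :=
  h.le_of_equivalence (r := fun u v => TraceEquiv I (f u) (f v))
    ⟨fun _ => .refl _, .symm, .trans⟩ hf

theorem TraceEquiv.append_left (w : List E) (h : TraceEquiv I u v) :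
    TraceEquiv I (w ++ u) (w ++ v) :=
  h.map (f := (w ++ ·)) fun _ _ ⟨p, q, a, b, hab, h₁, h₂⟩ =>
    .of_step ⟨w ++ p, q, a, b, hab, by simp [h₁], by simp [h₂]⟩

theorem TraceEquiv.append_right (h : TraceEquiv I u v) (w : List E) :
    TraceEquiv I (u ++ w) (v ++ w) :=
  h.map (f := (· ++ w)) fun _ _ ⟨p, q, a, b, hab, h₁, h₂⟩ =>
    .of_step ⟨p, q ++ w, a, b, hab, by simp [h₁], by simp [h₂]⟩

theorem TraceEquiv.perm (h : TraceEquiv I u v) : u.Perm v :=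
  h.le_of_equivalence (List.Perm.eqv E) fun _ _ ⟨p, q, a, b, _, h₁, h₂⟩ => by
    simpa [h₁, h₂] using (List.Perm.swap b a q).append_left p

theorem TraceEquiv.append_singleton_comm {b : E} (h : ∀ a ∈ x, I a b) :
    TraceEquiv I (x ++ [b]) (b :: x) := by
  induction x with
  | nil => exact .refl _
  | cons a x ih =>
    exact ((ih fun c hc => h c (mem_cons_of_mem a hc)).append_left [a]).trans
      (.of_step ⟨[], x, a, b, h a mem_cons_self, rfl, rfl⟩)

theorem TraceEquiv.append_comm (h : ∀ a ∈ x, ∀ b ∈ z, I a b) :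
    TraceEquiv I (x ++ z) (z ++ x) := by
  induction z with
  | nil => simpa using .refl x
  | cons b z ih =>
    have hb := (append_singleton_comm fun a ha => h a ha b mem_cons_self).append_right z
    have hz := (ih fun a ha c hc => h a ha c (mem_cons_of_mem b hc)).append_left [b]
    simpa using hb.trans hz

theorem TraceEquiv.append_cons_of_forall {a : E} (h : ∀ b ∈ x, I b a) :
    TraceEquiv I (x ++ a :: y) (a :: (x ++ y)) := by
  simpa using (append_comm (z := [a]) fun b hb _ hc => mem_singleton.1 hc ▸ h b hb).append_right y

theorem TraceEquiv.of_perm (hp : u.Perm v) (h : {a | a ∈ u}.Pairwise I) : TraceEquiv I u v := by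
  induction hp with
  | nil => exact .refl _
  | cons a _ ih =>
    exact (ih (h.mono fun b hb => mem_cons_of_mem a hb)).append_left [a]
  | swap a b l =>
    by_cases hab : a = b
    · subst hab; exact .refl _
    · exact .of_step ⟨[], l, b, a, h (by simp) (by simp) (Ne.symm hab), rfl, rfl⟩
  | trans hp _ ih₁ ih₂ =>
    exact (ih₁ h).trans (ih₂ (h.mono fun b hb => hp.mem_iff.2 hb))

end Trace

section Projection

variable {E : Type} [DecidableEq E] {I : E → E → Prop} {u v w x y : List E} {a b : E}

def projPair (a b : E) (w : List E) : List E := w.filter fun c => c = a ∨ c = b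

theorem projPair_append (a b : E) (u v : List E) :
    projPair a b (u ++ v) = projPair a b u ++ projPair a b v :=
  filter_append ..

theorem projPair_cons_left (a b : E) (u : List E) :
    projPair a b (a :: u) = a :: projPair a b u := by
  simp [projPair]

theorem count_projPair_right (a b : E) (u : List E) : (projPair a b u).count b = u.count b :=
  count_filter (by simp)

theorem TraceEquiv.projPair_eq [Std.Irrefl I] [Std.Symm I] (hab : ¬ I a b)
    (h : TraceEquiv I u v) : projPair a b u = projPair a b v := by
  refine h.le_of_equivalence (r := fun u v => projPair a b u = projPair a b v)
    ⟨fun _ => rfl, Eq.symm, Eq.trans⟩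
    fun _ _ ⟨p, q, c, d, hcd, h₁, h₂⟩ => ?_
  subst h₁ h₂
  suffices ¬ ((c = a ∨ c = b) ∧ (d = a ∨ d = b)) by
    by_cases hc : c = a ∨ c = b <;> by_cases hd : d = a ∨ d = b <;> simp_all [projPair]
  rintro ⟨hc | hc, hd | hd⟩ <;> subst hc hd
  exacts [irrefl _ hcd, hab hcd, hab (_root_.symm hcd), irrefl _ hcd]

theorem forall_indep_of_projPair_eq (hax : a ∉ x)
    (h : ∀ b, ¬ I a b → projPair a b (a :: u) = projPair a b (x ++ a :: y)) :
    ∀ b ∈ x, I a b := by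
  intro b hbx
  by_contra hab
  obtain ⟨c, t, hct⟩ := exists_cons_of_ne_nil (ne_nil_of_mem (a := b) (l := projPair a b x)
    (mem_filter.2 ⟨hbx, by simp⟩))
  have hac : a = c := by
    have := h b hab
    rw [projPair_cons_left, projPair_append, hct] at this
    exact (cons.inj this).1
  exact hax (hac ▸ (mem_filter.1 (hct ▸ mem_cons_self : c ∈ projPair a b x)).1)

theorem traceEquiv_iff_projPair_eq [Std.Irrefl I] [Std.Symm I] :
    TraceEquiv I u v ↔ ∀ a b, ¬ I a b → projPair a b u = projPair a b v := by
  refine ⟨fun h a b hab => h.projPair_eq hab, fun h => ?_⟩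
  induction u generalizing v with
  | nil =>
    cases v with
    | nil => exact .refl _
    | cons a v => simpa [projPair] using h a a (irrefl a)
  | cons a u ih =>
    have hav : a ∈ v := by
      have : a ∈ projPair a a v := h a a (irrefl a) ▸ by simp [projPair]
      exact (mem_filter.1 this).1
    obtain ⟨x, y, hax, rfl, -⟩ := exists_erase_eq hav
    have hx := forall_indep_of_projPair_eq hax fun b hab => h a b hab
    have hmove := TraceEquiv.append_cons_of_forall (I := I) (y := y) fun b hb => symm (hx b hb)
    refine ((ih fun c d hcd => ?_).append_left [a]).trans hmove.symm
    have := (h c d hcd).trans (hmove.projPair_eq hcd)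
    rw [← singleton_append, ← singleton_append (l := x ++ y), projPair_append,
      projPair_append] at this
    exact append_cancel_left this

theorem TraceEquiv.append_cancel_left [Std.Irrefl I] [Std.Symm I]
    (h : TraceEquiv I (w ++ u) (w ++ v)) : TraceEquiv I u v :=
  traceEquiv_iff_projPair_eq.2 fun a b hab =>
    List.append_cancel_left (by simpa only [projPair_append] using h.projPair_eq hab)

theorem TraceEquiv.forall_indep_of_cons [Std.Irrefl I] [Std.Symm I]
    (h : TraceEquiv I (a :: u) (x ++ a :: y)) (hax : a ∉ x) : ∀ b ∈ x, I a b :=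
  forall_indep_of_projPair_eq hax fun _ hab => h.projPair_eq hab

end Projection

section Expansion

variable {E : Type} {I : E → E → Prop} {τ : E → ℕ} {u v w : List E} {a b x : E}

@[simp] theorem expandWord_nil : expandWord τ [] = [] := rfl

@[simp] theorem expandWord_cons (e : E) (w : List E) :
    expandWord τ (e :: w) = replicate (τ e) e ++ expandWord τ w := by
  simp [expandWord]

@[simp] theorem expandWord_append (u v : List E) :
    expandWord τ (u ++ v) = expandWord τ u ++ expandWord τ v := by
  simp [expandWord]

theorem filter_expandWord (q : E → Bool) (w : List E) :
    (expandWord τ w).filter q = expandWord τ (w.filter q) := by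
  induction w with
  | nil => rfl
  | cons e w ih => by_cases he : q e <;> simp [he, ih]

theorem TraceEquiv.expandWord_congr (h : TraceEquiv I u v) :
    TraceEquiv I (expandWord τ u) (expandWord τ v) :=
  h.map (f := expandWord τ) fun _ _ ⟨p, q, a, b, hab, h₁, h₂⟩ => by
    have hcomm : TraceEquiv I (replicate (τ a) a ++ replicate (τ b) b)
        (replicate (τ b) b ++ replicate (τ a) a) :=
      append_comm fun c hc d hd => eq_of_mem_replicate hc ▸ eq_of_mem_replicate hd ▸ hab
    simpa [h₁, h₂] using (hcomm.append_right (expandWord τ q)).append_left _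

variable [DecidableEq E]

theorem count_expandWord (x : E) (w : List E) :
    (expandWord τ w).count x = τ x * w.count x := by
  induction w with
  | nil => simp
  | cons e w ih => by_cases he : e = x <;> simp [count_replicate, he, ih, mul_add, add_comm]

theorem mem_expandWord (hτ : ∀ e, 1 ≤ τ e) : x ∈ expandWord τ w ↔ x ∈ w := by
  simp only [← count_pos_iff, count_expandWord]
  exact ⟨fun h => Nat.pos_of_mul_pos_left h, Nat.mul_pos (hτ x)⟩

theorem dvd_count_of_expandWord_eq (hab : a ≠ b) :
    ∀ {z u v : List E}, expandWord τ z = u ++ a :: v → τ b ∣ u.count b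
  | [], u, v, h => by simp at h
  | e :: z, u, v, h => by
    have hrep : τ b ∣ (replicate (τ e) e).count b := by
      rw [count_replicate]; split_ifs with h <;> simp_all
    rw [expandWord_cons, append_eq_append_iff] at h
    rcases h with ⟨t, rfl, ht⟩ | ⟨t, he, ht⟩
    · rw [count_append]
      exact dvd_add hrep (dvd_count_of_expandWord_eq hab ht)
    · cases t with
      | nil => simpa [he] using hrep
      | cons c t =>
        obtain ⟨rfl, -⟩ := cons.inj ht
        have hae : a = e := eq_of_mem_replicate (he ▸ mem_append_right u mem_cons_self)
        have hbu : b ∉ u := fun hb =>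
          hab (hae.trans (eq_of_mem_replicate (he ▸ mem_append_left _ hb)).symm)
        simp [count_eq_zero.2 hbu]

theorem projPair_expandWord (a b : E) (w : List E) :
    projPair a b (expandWord τ w) = expandWord τ (projPair a b w) :=
  filter_expandWord ..

variable [Std.Irrefl I] [Std.Symm I]

theorem TraceEquiv.indep_of_not_dvd (h : TraceEquiv I (u ++ a :: v) (expandWord τ w))
    (hab : a ≠ b) (hu : ¬ τ b ∣ u.count b) : I a b := by
  by_contra hI
  have := h.projPair_eq hI
  rw [projPair_append, projPair_cons_left, projPair_expandWord] at this
  exact hu (count_projPair_right a b u ▸ dvd_count_of_expandWord_eq hab this.symm)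

theorem TraceEquiv.exists_of_expandWord_append (hτ : ∀ e, 1 ≤ τ e) :
    ∀ {l D w : List E}, TraceEquiv I (expandWord τ l ++ D) (expandWord τ w) →
      ∃ w', TraceEquiv I w (l ++ w') ∧ TraceEquiv I D (expandWord τ w')
  | [], D, w, h => ⟨w, .refl w, by simpa using h⟩
  | a :: l, D, w, h => by
    obtain ⟨k, hk⟩ : ∃ k, τ a = k + 1 := ⟨τ a - 1, by have := hτ a; omega⟩
    have haw : a ∈ w := (mem_expandWord hτ).1 (h.perm.subset (by simp [hk]))
    obtain ⟨x, y, hax, rfl, -⟩ := exists_erase_eq haw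
    have h' : TraceEquiv I (a :: (replicate k a ++ (expandWord τ l ++ D)))
        (expandWord τ x ++ a :: (replicate k a ++ expandWord τ y)) := by
      simpa [hk, replicate_succ] using h
    have hx := h'.forall_indep_of_cons (mt (mem_expandWord hτ).1 hax)
    have hmove := append_cons_of_forall (I := I) (y := y)
      fun b hb => _root_.symm (hx b ((mem_expandWord hτ).2 hb))
    have hrest : TraceEquiv I (expandWord τ l ++ D) (expandWord τ (x ++ y)) :=
      .append_cancel_left (w := replicate (τ a) a) (by simpa using h.trans hmove.expandWord_congr)
    obtain ⟨w', hw, hD⟩ := exists_of_expandWord_append hτ hrest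
    exact ⟨w', hmove.trans (hw.append_left [a]), hD⟩

end Expansion

section Paths

variable {S E : Type} {Tran : S → E → S → Prop} {I : E → E → Prop} {s t r : S} {u v : List E}

theorem ProcPath.append (h : ProcPath Tran s u t) (h' : ProcPath Tran t v r) :
    ProcPath Tran s (u ++ v) r := by
  induction h with
  | nil => exact h'
  | cons ht _ ih => exact .cons ht (ih h')

theorem ProcPath.exists_of_append (h : ProcPath Tran s (u ++ v) r) :
    ∃ t, ProcPath Tran s u t ∧ ProcPath Tran t v r := by
  induction u generalizing s with
  | nil => exact ⟨s, .nil s, h⟩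
  | cons e u ih =>
    obtain _ | ⟨ht, hp⟩ := h
    obtain ⟨t, h₁, h₂⟩ := ih hp
    exact ⟨t, .cons ht h₁, h₂⟩

theorem ProcPath.swap
    (comm : ∀ a b s s' s'', I a b → Tran s a s' → Tran s' b s'' →
      ∃ s₁, Tran s b s₁ ∧ Tran s₁ a s'')
    {a b : E} (hab : I a b) (h : ProcPath Tran s (u ++ a :: b :: v) t) :
    ProcPath Tran s (u ++ b :: a :: v) t := by
  obtain ⟨s₁, hu, _ | ⟨ha, _ | ⟨hb, hv⟩⟩⟩ := h.exists_of_append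
  obtain ⟨s₂, hb', ha'⟩ := comm _ _ _ _ _ hab ha hb
  exact hu.append (.cons hb' (.cons ha' hv))

theorem ProcPath.of_traceEquiv [Std.Symm I]
    (comm : ∀ a b s s' s'', I a b → Tran s a s' → Tran s' b s'' →
      ∃ s₁, Tran s b s₁ ∧ Tran s₁ a s'')
    (h : TraceEquiv I u v) (hp : ProcPath Tran s u t) : ProcPath Tran s v t := by
  refine (h.le_of_equivalence (r := fun u v => ∀ s t, ProcPath Tran s u t ↔ ProcPath Tran s v t)
    ⟨fun _ _ _ => .rfl, fun h s t => (h s t).symm, fun h h' s t => (h s t).trans (h' s t)⟩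
    ?_ s t).1 hp
  rintro _ _ ⟨p, q, a, b, hab, rfl, rfl⟩ s t
  exact ⟨swap comm hab, swap comm (symm hab)⟩

theorem IsParProc.exists_cons {M : List (List E)} {c : List E} (hM : IsParProc I M)
    (hc : c.Pairwise I) :
    ∃ M', IsParProc I M' ∧ M'.flatten = c ++ M.flatten ∧ M'.length ≤ M.length + 1 := by
  by_cases hc₀ : c = []
  · exact ⟨M, hM, by simp [hc₀], by omega⟩
  · refine ⟨c :: M, fun b hb => ?_, rfl, le_rfl⟩
    rcases mem_cons.1 hb with rfl | hb
    exacts [⟨hc₀, hc⟩, hM b hb]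

end Paths

section Refinement

variable {S E : Type} [DecidableEq E] {I : E → E → Prop} {τ : E → ℕ}
  {Tran : S → E → S → Prop} {s : S}

/-- The word `a₁^{i₁} ⋯ a_m^{i_m}` of the paper's state `(s, a₁^{i₁} ⋯ a_m^{i_m})`, encoding the
progress function `p` of a configuration of `Tick`. -/
def IsProgressWord (I : E → E → Prop) (p : E → ℕ) (r : List E) : Prop :=
  (∀ x, r.count x = p x) ∧ {x | x ∈ r}.Pairwise I

theorem IsProgressWord.tick [Std.Symm I] {p p' : E → ℕ} {r c l : List E}
    (hr : IsProgressWord I p r) (hc : c.Nodup) (hcI : {x | x ∈ c}.Pairwise I)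
    (hfresh : ∀ a ∈ c, 0 < p a ∨ ∀ b, 0 < p b → I a b)
    (hl : ∀ x, x ∈ l ↔ x ∈ c ∧ p x + 1 = τ x) (hlnd : l.Nodup)
    (hp' : ∀ x, p' x = if x ∈ c then (if p x + 1 = τ x then 0 else p x + 1) else p x) :
    ∃ r', IsProgressWord I p' r' ∧ TraceEquiv I (r ++ c) (expandWord τ l ++ r') := by
  have hrc : {x | x ∈ r ++ c}.Pairwise I := by
    have : {x | x ∈ r ++ c} = {x | x ∈ r} ∪ {x | x ∈ c} := by ext; simp
    rw [this, Set.pairwise_union_of_symm]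
    refine ⟨hr.2, hcI, fun a ha b hb hab => ?_⟩
    have hpa : 0 < p a := hr.1 a ▸ count_pos_iff.2 ha
    rcases hfresh b hb with hpb | hind
    · exact hr.2 ha (count_pos_iff.1 (hr.1 b ▸ hpb)) hab
    · exact symm (hind a hpa)
  set r' := (r ++ c).filter (· ∉ l)
  have hr' (x : E) : r'.count x = if x ∈ l then 0 else p x + if x ∈ c then 1 else 0 := by
    by_cases hxl : x ∈ l
    · rw [if_pos hxl]
      exact count_eq_zero.2 fun h => by simp_all [r']
    · rw [if_neg hxl, count_filter (by simpa using hxl), count_append, hr.1, hc.count]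
  refine ⟨r', ⟨fun x => ?_, hrc.mono fun x hx => (mem_filter.1 hx).1⟩,
    .of_perm (perm_iff_count.2 fun x => ?_) hrc⟩
  · rw [hr', hp']
    have := hl x
    split_ifs <;> simp_all
  · rw [count_append, count_append, count_expandWord, hlnd.count, hr', hr.1, hc.count]
    have := hl x
    split_ifs <;> simp_all

theorem TickN.exists_parProc [Std.Symm I] :
    ∀ {n : ℕ} {c : S × (E → ℕ)} {r : List E}, TickN Tran I τ n c (s, fun _ => 0) →
      IsProgressWord I c.2 r →
      ∃ w M, ProcPath Tran c.1 w s ∧ IsParProc I M ∧ M.length ≤ n ∧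
        TraceEquiv I (r ++ M.flatten) (expandWord τ w)
  | 0, c, r, h, hr => by
    subst h
    have hr₀ : r = [] := eq_nil_iff_forall_not_mem.2 fun x hx => by
      simpa [hr.1 x] using count_pos_iff.2 hx
    exact ⟨[], [], .nil s, by simp [IsParProc], le_rfl, by simpa [hr₀] using .refl []⟩
  | n + 1, c, r, ⟨c₁, ⟨F, hFI, hfresh, _, hp', l, hlnd, hl, hpath⟩, h⟩, hr => by
    have hFI' : ∀ a ∈ F.toList, ∀ b ∈ F.toList, a ≠ b → I a b := fun a ha b hb =>
      hFI a (Finset.mem_toList.1 ha) b (Finset.mem_toList.1 hb)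
    obtain ⟨r₁, hr₁, hte⟩ := hr.tick (τ := τ) (Finset.nodup_toList F) hFI' (by simpa using hfresh)
      (fun x => by rw [← mem_toFinset, hl]; simp) hlnd (by simpa using hp')
    obtain ⟨w, M, hw, hM, hMn, hMw⟩ := exists_parProc h hr₁
    obtain ⟨M', hM', hflat, hlen⟩ :=
      hM.exists_cons ((Finset.nodup_toList F).pairwise_of_forall_ne hFI')
    refine ⟨l ++ w, M', hpath.append hw, hM', by omega, ?_⟩
    rw [hflat, expandWord_append, ← append_assoc]
    exact (hte.append_right _).trans (by simpa only [append_assoc] using hMw.append_left _)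

/-- Otherwise, projecting onto `{a, b}`, the `0 < p b < τ b` copies of `b` in front of `a` would
form complete blocks `b ^ τ b` of the expansion. -/
theorem IsProgressWord.indep_of_started [Std.Irrefl I] [Std.Symm I] {p : E → ℕ} {r blk R w : List E}
    (hr : IsProgressWord I p r) (hlt : ∀ x, p x < τ x) (hblk : blk.Pairwise I)
    (h : TraceEquiv I (r ++ blk ++ R) (expandWord τ w)) {a b : E} (ha : a ∈ blk)
    (hpa : p a = 0) (hpb : 0 < p b) : I a b := by
  have hab : a ≠ b := by rintro rfl; omega
  by_cases hb : b ∈ blk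
  · exact hblk.set_pairwise ha hb hab
  obtain ⟨c₁, c₂, -, rfl, -⟩ := exists_erase_eq ha
  refine TraceEquiv.indep_of_not_dvd (u := r ++ c₁) (v := c₂ ++ R) (by simpa using h) hab ?_
  have hc₁ : c₁.count b = 0 := count_eq_zero.2 fun h => hb (by simp [h])
  rw [count_append, hr.1, hc₁]
  exact Nat.not_dvd_of_pos_of_lt hpb (hlt b)

theorem IsParProc.tickN [Std.Irrefl I] [Std.Symm I] (hτ : ∀ e, 1 ≤ τ e)
    (comm : ∀ a b s s' s'', I a b → Tran s a s' → Tran s' b s'' →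
      ∃ s₁, Tran s b s₁ ∧ Tran s₁ a s'') :
    ∀ {M : List (List E)} {s₁ : S} {p : E → ℕ} {r w : List E}, IsParProc I M →
      IsProgressWord I p r → (∀ x, p x < τ x) → ProcPath Tran s₁ w s →
      TraceEquiv I (r ++ M.flatten) (expandWord τ w) →
      TickN Tran I τ M.length (s₁, p) (s, fun _ => 0)
  | [], s₁, p, r, w, _, hr, hlt, hw, hte => by
    have hcount (x : E) : p x = τ x * w.count x := by
      rw [← hr.1, ← count_expandWord]; exact (by simpa using hte.perm : r.Perm _).count_eq x
    have hw₀ : w = [] := eq_nil_iff_forall_not_mem.2 fun x hx => by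
      have := hcount x ▸ hlt x
      have := count_pos_iff.2 hx
      nlinarith
    subst hw₀
    cases hw
    have hp : p = fun _ => 0 := funext fun x => by simpa using hcount x
    simp [TickN, hp]
  | blk :: M, s₁, p, r, w, hM, hr, hlt, hw, hte => by
    obtain ⟨-, hblk⟩ := hM blk mem_cons_self
    have hnd : blk.Nodup := hblk.nodup
    set l := blk.filter fun x => p x + 1 = τ x
    set p' : E → ℕ := fun x => if x ∈ blk then (if p x + 1 = τ x then 0 else p x + 1) else p x
    have hte₀ : TraceEquiv I (r ++ blk ++ M.flatten) (expandWord τ w) := by simpa using hte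
    have hfresh (a : E) (ha : a ∈ blk) : 0 < p a ∨ ∀ b, 0 < p b → I a b :=
      or_iff_not_imp_left.2 fun hpa _ hpb => hr.indep_of_started hlt hblk hte₀ ha (by omega) hpb
    obtain ⟨r', hr', hte'⟩ := hr.tick (l := l) (p' := p') hnd hblk.set_pairwise hfresh
      (by simp [l]) (hnd.filter _) (fun _ => rfl)
    obtain ⟨w', hww', hrest⟩ := TraceEquiv.exists_of_expandWord_append hτ
      (by simpa using (hte'.symm.append_right M.flatten).trans hte₀)
    obtain ⟨s₂, hl, hw'⟩ := (hw.of_traceEquiv comm hww').exists_of_append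
    have hlt' (x : E) : p' x < τ x := by
      have := hlt x; have := hτ x
      simp only [p']; split_ifs <;> omega
    refine ⟨(s₂, p'), ⟨blk.toFinset, ?_, ?_, fun a _ => hlt a, fun a => by simp [p'],
      l, hnd.filter _, by ext; simp [l], hl⟩,
      tickN hτ comm (fun b hb => hM b (mem_cons_of_mem _ hb)) hr' hlt' hw' hrest⟩
    · exact fun a ha b hb => hblk.set_pairwise (mem_toFinset.1 ha) (mem_toFinset.1 hb)
    · exact fun a ha => hfresh a (mem_toFinset.1 ha)

end Refinement

theorem isLeast_iff_of_subset_of_exists_le {α : Type*} [PartialOrder α] {s t : Set α} {d : α}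
    (hts : t ⊆ s) (hst : ∀ a ∈ s, ∃ b ∈ t, b ≤ a) : IsLeast s d ↔ IsLeast t d := by
  refine ⟨fun ⟨hd, hle⟩ => ?_, fun ⟨hd, hle⟩ => ⟨hts hd, fun a ha => ?_⟩⟩
  · obtain ⟨b, hb, hbd⟩ := hst d hd
    exact ⟨le_antisymm hbd (hle (hts hb)) ▸ hb, fun a ha => hle (hts ha)⟩
  · obtain ⟨b, hb, hba⟩ := hst a ha
    exact (hle hb).trans hba

theorem shortest_path_eq_min_time_general
    {S E : Type} [DecidableEq E]
    (I : E → E → Prop) (hirr : Irreflexive I) (hsym : Symmetric I)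
    (Tran : S → E → S → Prop)
    (comm : ∀ a b s s' s'', I a b → Tran s a s' → Tran s' b s'' →
      ∃ s₁, Tran s b s₁ ∧ Tran s₁ a s'')
    (τ : E → ℕ) (hτ : ∀ e, 1 ≤ τ e)
    (s₀ s : S) (d : ℕ) :
    IsLeast {n : ℕ | TickN Tran I τ n (s₀, fun _ => 0) (s, fun _ => 0)} d ↔
    IsLeast {m : ℕ | ∃ w : List E, ProcPath Tran s₀ w s ∧
      ∃ M : List (List E), IsParProc I M ∧
        TraceEquiv I M.flatten (expandWord τ w) ∧ M.length = m} d := by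
  have : Std.Irrefl I := ⟨hirr⟩
  have : Std.Symm I := ⟨fun _ _ h => hsym h⟩
  have hr₀ : IsProgressWord I (fun _ => 0) [] := ⟨by simp, by simp⟩
  refine isLeast_iff_of_subset_of_exists_le ?_ fun n hn => ?_
  · rintro _ ⟨w, hw, M, hM, hMw, rfl⟩
    exact hM.tickN hτ comm hr₀ hτ hw (by simpa using hMw)
  · obtain ⟨w, M, hw, hM, hMn, hMw⟩ := TickN.exists_parProc hn hr₀
    exact ⟨M.length, ⟨w, hw, M, hM, by simpa using hMw, rfl⟩, hMn⟩

/-- in the graph on `S_τ`, the length of a shortest directed path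
from `(s₀,1)` to `(s,1)` equals the minimum, over all traces `μ` with
`s₀·μ = s`, of the execution time of a parallel process realizing `μ` with
time function `τ` (i.e. the minimal number of steps of a factorization of the
`τ`-expanded trace into blocks of pairwise independent letters). -/
theorem shortest_path_eq_min_time
    {S E : Type} [DecidableEq E]
    (I : E → E → Prop) (hirr : Irreflexive I) (hsym : Symmetric I)
    (Tran : S → E → S → Prop)
    (det : ∀ s e s' s'', Tran s e s' → Tran s e s'' → s' = s'')
    (comm : ∀ a b s s' s'', I a b → Tran s a s' → Tran s' b s'' →
      ∃ s₁, Tran s b s₁ ∧ Tran s₁ a s'')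
    (τ : E → ℕ) (hτ : ∀ e, 1 ≤ τ e)
    (s₀ s : S) (d : ℕ) :
    IsLeast {n : ℕ | TickN Tran I τ n (s₀, fun _ => 0) (s, fun _ => 0)} d ↔
    IsLeast {m : ℕ | ∃ w : List E, ProcPath Tran s₀ w s ∧
      ∃ M : List (List E), IsParProc I M ∧
        TraceEquiv I M.flatten (expandWord τ w) ∧ M.length = m} d :=
  shortest_path_eq_min_time_general I hirr hsym Tran comm τ hτ s₀ s d
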